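/- arXiv:2210.10285 — 6 statements merged into one kernel-verified Lean document; each statement's English description precedes it below -/
import Mathlib

section
/- An inert subring of a unique factorization domain is a unique factorization domain. -/
/-!
Inertness turns a factorization in `A` of a nonzero element of `B` into a factorization in `B`.
Hence units of `A` lying in `B` are units of `B`, strict divisibility in `B` is strict
divisibility in `A` (so `B` inherits well-foundedness of strict divisibility), and an irreducible
element of `B` stays irreducible, hence prime, in `A`, and is then prime in `B`.
-/

def Subring.IsInert {A : Type*} [CommRing A] (B : Subring A) : Prop :=
  ∀ f g : A, f ≠ 0 → g ≠ 0 → f * g ∈ B → f ∈ B ∧ g ∈ B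

namespace Subring.IsInert

variable {A : Type*} [CommRing A] {B : Subring A}

theorem mem_of_mul_mem (hB : B.IsInert) {a b : A} (hab : a * b ∈ B) (h0 : a * b ≠ 0) :
    a ∈ B ∧ b ∈ B :=
  hB a b (left_ne_zero_of_mul h0) (right_ne_zero_of_mul h0) hab

theorem isUnit_of_isUnit_coe [Nontrivial A] (hB : B.IsInert) {x : B} (hx : IsUnit (x : A)) :
    IsUnit x := by
  obtain ⟨y, hxy⟩ := hx.exists_right_inv
  have hy : y ∈ B := (hB.mem_of_mul_mem (hxy ▸ B.one_mem) (hxy ▸ one_ne_zero)).2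
  exact IsUnit.of_mul_eq_one (⟨y, hy⟩ : B) (Subtype.ext hxy)

theorem dvdNotUnit_coe [Nontrivial A] (hB : B.IsInert) {a b : B} (h : DvdNotUnit a b) :
    DvdNotUnit (a : A) b := by
  obtain ⟨ha, c, hc, rfl⟩ := h
  exact ⟨by exact_mod_cast ha, c, fun hc' => hc (hB.isUnit_of_isUnit_coe hc'), rfl⟩

theorem wfDvdMonoid [Nontrivial A] [WfDvdMonoid A] (hB : B.IsInert) : WfDvdMonoid B :=
  ⟨RelHomClass.wellFounded (⟨Subtype.val, hB.dvdNotUnit_coe⟩ : DvdNotUnit →r DvdNotUnit)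
    wellFounded_dvdNotUnit⟩

theorem irreducible_coe [Nontrivial A] (hB : B.IsInert) {p : B} (hp : Irreducible p) :
    Irreducible (p : A) := by
  refine ⟨fun hu => hp.not_isUnit (hB.isUnit_of_isUnit_coe hu), fun f g hfg => ?_⟩
  have hp0 : f * g ≠ 0 := hfg ▸ by exact_mod_cast hp.ne_zero
  obtain ⟨hf, hg⟩ := hB.mem_of_mul_mem (hfg ▸ p.2) hp0
  rcases hp.isUnit_or_isUnit (a := ⟨f, hf⟩) (b := ⟨g, hg⟩) (Subtype.ext hfg) with h | h
  · exact .inl (h.map B.subtype)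
  · exact .inr (h.map B.subtype)

theorem prime_of_prime_coe (hB : B.IsInert) {p : B} (hp : Prime (p : A)) : Prime p := by
  have hdvd : ∀ a : B, (p : A) ∣ a → p ∣ a := by
    rintro a ⟨d, hd⟩
    rcases eq_or_ne (a : A) 0 with ha | ha
    · exact ⟨0, Subtype.ext (by simp [ha])⟩
    · exact ⟨⟨d, (hB.mem_of_mul_mem (hd ▸ a.2) (hd ▸ ha)).2⟩, Subtype.ext hd⟩
  refine ⟨fun h => hp.ne_zero (by exact_mod_cast h), fun hu => hp.not_isUnit (hu.map B.subtype),
    fun a b hab => ?_⟩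
  exact (hp.dvd_or_dvd (by exact_mod_cast map_dvd B.subtype hab)).imp (hdvd a) (hdvd b)

theorem uniqueFactorizationMonoid [IsDomain A] [UniqueFactorizationMonoid A] (hB : B.IsInert) :
    UniqueFactorizationMonoid B where
  toIsWellFounded := hB.wfDvdMonoid
  irreducible_iff_prime :=
    ⟨fun hp => hB.prime_of_prime_coe (hB.irreducible_coe hp).prime, Prime.irreducible⟩

end Subring.IsInert

/-- An inert subring of a unique factorization domain is a unique factorization domain. -/
theorem stmt_3 {A : Type*} [CommRing A] [IsDomain A] [UniqueFactorizationMonoid A]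
    (B : Subring A)
    (hinert : ∀ f g : A, f ≠ 0 → g ≠ 0 → f * g ∈ B → f ∈ B ∧ g ∈ B) :
    UniqueFactorizationMonoid B :=
  Subring.IsInert.uniqueFactorizationMonoid hinert
end

section
/- A retract of a unique factorization domain is a unique factorization domain. That is, if A is a UFD, R is a subring of A, and there is a ring homomorphism φ : A → R with φ(r) = r for all r ∈ R, then R is a UFD. -/
/-!
If `g ∘ f = id` for multiplicative maps `f : M → N` and `g : N → M`, then `f` reflects
divisibility (apply `g` to `f b = f a * c`) and units, so chains of strict divisors in `M` map to
chains of strict divisors in `N`, and a splitting `f a = x * y` of a divisor of `f b * f c` comes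
back as `a = g x * g y`. Hence well-founded divisibility and the decomposition property, which
together characterise unique factorization, descend from `N` to `M`.
-/

open Function

section LeftInverse

variable {M N : Type*}

theorem map_dvd_map_iff_of_leftInverse [Monoid M] [Monoid N] {f : M →* N} {g : N →* M}
    (hfg : LeftInverse g f) {a b : M} : f a ∣ f b ↔ a ∣ b := by
  refine ⟨fun h ↦ ?_, map_dvd f⟩
  simpa only [hfg a, hfg b] using map_dvd g h

theorem DecompositionMonoid.of_leftInverse [CommMonoid M] [CommMonoid N] [DecompositionMonoid N]
    {f : M →* N} {g : N →* M} (hfg : LeftInverse g f) : DecompositionMonoid M where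
  primal a b c h := by
    rw [← map_dvd_map_iff_of_leftInverse hfg, map_mul] at h
    obtain ⟨x, y, hx, hy, hxy⟩ := exists_dvd_and_dvd_of_dvd_mul h
    refine ⟨g x, g y, ?_, ?_, ?_⟩
    · simpa only [hfg b] using map_dvd g hx
    · simpa only [hfg c] using map_dvd g hy
    · rw [← map_mul, ← hxy, hfg a]

variable [CommMonoidWithZero M] [CommMonoidWithZero N]

theorem DvdNotUnit.map_of_leftInverse {f : M →*₀ N} {g : N →*₀ M} (hfg : LeftInverse g f)
    {a b : M} (h : DvdNotUnit a b) : DvdNotUnit (f a) (f b) := by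
  obtain ⟨ha, x, hx, rfl⟩ := h
  refine ⟨fun hfa ↦ ha ?_, f x, ?_, map_mul f a x⟩
  · rw [← hfg a, hfa, map_zero]
  · rwa [isUnit_map_of_leftInverse g hfg]

theorem WfDvdMonoid.of_leftInverse [WfDvdMonoid N] {f : M →*₀ N} {g : N →*₀ M}
    (hfg : LeftInverse g f) : WfDvdMonoid M :=
  ⟨Subrelation.wf (DvdNotUnit.map_of_leftInverse hfg) (InvImage.wf f wellFounded_dvdNotUnit)⟩

theorem UniqueFactorizationMonoid.of_leftInverse [IsCancelMulZero M] [UniqueFactorizationMonoid N]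
    {f : M →*₀ N} {g : N →*₀ M} (hfg : LeftInverse g f) : UniqueFactorizationMonoid M :=
  have := WfDvdMonoid.of_leftInverse hfg
  have := DecompositionMonoid.of_leftInverse (f := f.toMonoidHom) (g := g.toMonoidHom) hfg
  ufm_of_decomposition_of_wfDvdMonoid

end LeftInverse

theorem stmt_5_general {A : Type*} [CommRing A] [UniqueFactorizationMonoid A]
    (R : Subring A) (φ : A →+* R) (hφ : ∀ r : R, φ (r : A) = r) :
    UniqueFactorizationMonoid R :=
  UniqueFactorizationMonoid.of_leftInverse
    (f := R.subtype.toMonoidWithZeroHom) (g := φ.toMonoidWithZeroHom) hφ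

/-- A retract of a unique factorization domain is a unique factorization domain. -/
theorem stmt_5 {A : Type*} [CommRing A] [IsDomain A] [UniqueFactorizationMonoid A]
    (R : Subring A) (φ : A →+* R) (hφ : ∀ r : R, φ (r : A) = r) :
    UniqueFactorizationMonoid R :=
  stmt_5_general R φ hφ
end

section
/- Let R be an integral domain and A an A^n-fibration over R. Then A is an integral domain and R is inert in A: for all nonzero f, g ∈ A with fg ∈ R, both f and g lie in R. -/
/-!
Since `A` is flat over `R`, it embeds into its generic fiber `K ⊗[R] A ≅ K[X₁, …, Xₙ]`,
`K = Frac R`, so `A` is a domain. If `f * g = r ∈ R \ {0}`, then the image of `f` is a unit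
of `K[X₁, …, Xₙ]`, hence a constant `a / s`, i.e. `s * f = a` in `A`. All fibers being
nonzero, `A` is faithfully flat over `R`, so `sA ∩ R = sR`; thus `a = s * t` with `t ∈ R`,
and cancelling `s` in the domain `A` gives `f = t`.
-/

open TensorProduct

section

variable {R A : Type*} [CommRing R] [CommRing A] [Algebra R A]

lemma Module.FaithfullyFlat.of_nontrivial_fiber [Module.Flat R A]
    (h : ∀ (P : Ideal R) [P.IsPrime], Nontrivial (P.ResidueField ⊗[R] A)) :
    Module.FaithfullyFlat R A :=
  .of_comap_surjective fun p ↦ (PrimeSpectrum.nontrivial_iff_mem_rangeComap p).mp (h p.asIdeal)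

lemma mem_range_of_algebraMap_mul_mem_range [Module.FaithfullyFlat R A] [IsDomain A]
    {s : R} (hs : s ≠ 0) {f : A} (hf : algebraMap R A s * f ∈ (algebraMap R A).range) :
    f ∈ (algebraMap R A).range := by
  obtain ⟨a, ha⟩ := hf
  have ha_mem : a ∈ ((Ideal.span {s}).map (algebraMap R A)).comap (algebraMap R A) := by
    rw [Ideal.mem_comap, Ideal.map_span, Set.image_singleton, ha]
    exact Ideal.mul_mem_right f _ (Ideal.mem_span_singleton_self _)
  rw [Ideal.comap_map_eq_self_of_faithfullyFlat] at ha_mem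
  obtain ⟨t, rfl⟩ := Ideal.mem_span_singleton'.mp ha_mem
  have hs' : algebraMap R A s ≠ 0 :=
    (map_ne_zero_iff _ (FaithfulSMul.algebraMap_injective R A)).mpr hs
  exact ⟨t, mul_left_cancel₀ hs' (by rw [← map_mul, mul_comm, ha])⟩

lemma exists_algebraMap_mul_mem_range_of_isUnit {K σ : Type*} [Field K] [Algebra R K]
    [IsFractionRing R K] [Nontrivial R] {ψ : A →ₐ[R] MvPolynomial σ K} (hψ : Function.Injective ψ)
    {f : A} (hf : IsUnit (ψ f)) :
    ∃ s : R, s ≠ 0 ∧ algebraMap R A s * f ∈ (algebraMap R A).range := by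
  obtain ⟨c, -, hc⟩ := MvPolynomial.isUnit_iff_eq_C_of_isReduced.mp hf
  obtain ⟨⟨a, s⟩, has⟩ := IsLocalization.surj (nonZeroDivisors R) c
  refine ⟨s, nonZeroDivisors.coe_ne_zero s, a, hψ ?_⟩
  simp only [map_mul, AlgHom.commutes, hc, MvPolynomial.algebraMap_eq,
    IsScalarTower.algebraMap_apply R K (MvPolynomial σ K), ← has, mul_comm]

lemma mem_range_of_mul_mem_range {K σ : Type*} [Field K] [Algebra R K] [IsFractionRing R K]
    [Nontrivial R] [Module.FaithfullyFlat R A] [IsDomain A] {ψ : A →ₐ[R] MvPolynomial σ K}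
    (hψ : Function.Injective ψ) {f g : A} (hf : f ≠ 0) (hg : g ≠ 0)
    (hfg : f * g ∈ (algebraMap R A).range) : f ∈ (algebraMap R A).range := by
  obtain ⟨r, hr⟩ := hfg
  have hr0 : r ≠ 0 := by
    rintro rfl
    exact mul_ne_zero hf hg (by rw [← hr, map_zero])
  have hunit : IsUnit (ψ f * ψ g) := by
    rw [← map_mul, ← hr, AlgHom.commutes, IsScalarTower.algebraMap_apply R K]
    exact (IsUnit.mk0 _ ((map_ne_zero_iff _ (IsFractionRing.injective R K)).mpr hr0)).map _
  obtain ⟨s, hs, hsf⟩ :=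
    exists_algebraMap_mul_mem_range_of_isUnit hψ (isUnit_of_mul_isUnit_left hunit)
  exact mem_range_of_algebraMap_mul_mem_range hs hsf

end

theorem stmt_7_general {R A : Type*} [CommRing R] [IsDomain R] [CommRing A] [Algebra R A] (n : ℕ)
    (hflat : Module.Flat R A)
    (hfib : ∀ (P : Ideal R) [P.IsPrime],
      Nonempty
        ((TensorProduct R (IsLocalRing.ResidueField (Localization.AtPrime P)) A)
          ≃ₐ[IsLocalRing.ResidueField (Localization.AtPrime P)]
        MvPolynomial (Fin n) (IsLocalRing.ResidueField (Localization.AtPrime P)))) :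
    IsDomain A ∧ ∀ f g : A, f ≠ 0 → g ≠ 0 → f * g ∈ (algebraMap R A).range →
      f ∈ (algebraMap R A).range ∧ g ∈ (algebraMap R A).range := by
  set K := (⊥ : Ideal R).ResidueField
  obtain ⟨e⟩ := hfib ⊥
  let ψ : A →ₐ[R] MvPolynomial (Fin n) K :=
    (e.toAlgHom.restrictScalars R).comp Algebra.TensorProduct.includeRight
  have hψ : Function.Injective ψ :=
    e.injective.comp (Algebra.TensorProduct.includeRight_injective (IsFractionRing.injective R K))
  have hA : IsDomain A := hψ.isDomain ψ.toRingHom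
  have : Module.FaithfullyFlat R A :=
    .of_nontrivial_fiber fun P _ ↦ (hfib P).some.toEquiv.nontrivial
  exact ⟨hA, fun f g hf hg hfg ↦
    ⟨mem_range_of_mul_mem_range hψ hf hg hfg,
      mem_range_of_mul_mem_range hψ hg hf (mul_comm f g ▸ hfg)⟩⟩

/-- If `R` is an integral domain and `A` an `𝔸ⁿ`-fibration over `R`, then `A` is an
integral domain and (the image of) `R` is inert in `A`. -/
theorem stmt_7 {R A : Type*} [CommRing R] [IsDomain R] [CommRing A] [Algebra R A] (n : ℕ)
    (hfg : Algebra.FiniteType R A) (hflat : Module.Flat R A)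
    (hfib : ∀ (P : Ideal R) [P.IsPrime],
      Nonempty
        ((TensorProduct R (IsLocalRing.ResidueField (Localization.AtPrime P)) A)
          ≃ₐ[IsLocalRing.ResidueField (Localization.AtPrime P)]
        MvPolynomial (Fin n) (IsLocalRing.ResidueField (Localization.AtPrime P)))) :
    IsDomain A ∧ ∀ f g : A, f ≠ 0 → g ≠ 0 → f * g ∈ (algebraMap R A).range →
      f ∈ (algebraMap R A).range ∧ g ∈ (algebraMap R A).range :=
  stmt_7_general n hflat hfib
end

section
/- Let R be a ring containing ℚ, A a commutative R-algebra, and D : A → A a locally nilpotent R-derivation having a slice s (i.e., D(s) = 1). Then A = Ker(D)[s] and s is transcendental over Ker(D), so A is a polynomial ring in one variable over Ker(D). -/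
/-!
Because `D` kills `B = Ker D` and `D s = 1`, it acts on polynomial expressions in `s` as `d/dT`:
`D (p(s)) = p'(s)`. If `p(s) = 0` with `n = deg p`, applying `D^n` gives `n! • lc(p) = 0`, so
`p = 0`. Conversely, if `D^(n+1) a = 0` then by induction `D a = p(s)`; as `ℚ ⊆ B`, `p` has an
antiderivative `P`, and `a - P(s) ∈ Ker D = B`.
-/

open Polynomial

namespace Polynomial

theorem iterate_derivative_natDegree {K : Type*} [Semiring K] (p : K[X]) :
    derivative^[p.natDegree] p = C (p.natDegree.factorial • p.leadingCoeff) := by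
  have hconst : (derivative^[p.natDegree] p).natDegree ≤ 0 :=
    (natDegree_iterate_derivative p _).trans_eq (Nat.sub_self _)
  rw [eq_C_of_natDegree_le_zero hconst, coeff_iterate_derivative, zero_add,
    Nat.descFactorial_self, leadingCoeff]

theorem derivative_surjective {K : Type*} [CommRing K] [Algebra ℚ K] :
    Function.Surjective (derivative : K[X] →ₗ[K] K[X]) := by
  intro p
  induction p using Polynomial.induction_on' with
  | add p q hp hq =>
    obtain ⟨P, rfl⟩ := hp
    obtain ⟨Q, rfl⟩ := hq
    exact ⟨P + Q, map_add _ _ _⟩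
  | monomial n c =>
    refine ⟨monomial (n + 1) (algebraMap ℚ K (n + 1)⁻¹ * c), ?_⟩
    have hcast : ((n + 1 : ℕ) : K) = algebraMap ℚ K (n + 1) := by simp
    rw [derivative_monomial, Nat.add_sub_cancel, hcast, mul_right_comm, ← map_mul,
      inv_mul_cancel₀ (by positivity), map_one, one_mul]

end Polynomial

namespace Derivation

variable {R A : Type*} [CommRing R] [CommRing A] [Algebra R A] (D : Derivation R A A)
  {B : Subalgebra R A}

def extendScalars (hB : ∀ b : B, D b = 0) : Derivation B A A where
  toFun := D
  map_add' := D.map_add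
  map_smul' b x := by simp [Subalgebra.smul_def, D.leibniz, hB b]
  map_one_eq_zero' := D.map_one_eq_zero
  leibniz' := D.leibniz

theorem map_aeval_of_forall_eq_zero (hB : ∀ b : B, D b = 0) (p : B[X]) (x : A) :
    D (aeval x p) = aeval x (derivative p) * D x := by
  rw [← smul_eq_mul]
  exact (D.extendScalars hB).map_aeval p x

variable {s : A}

theorem iterate_map_aeval_of_slice (hB : ∀ b : B, D b = 0) (hs : D s = 1) (k : ℕ) (p : B[X]) :
    D^[k] (aeval s p) = aeval s (derivative^[k] p) := by
  induction k generalizing p with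
  | zero => rfl
  | succ k ih =>
    rw [Function.iterate_succ_apply, Function.iterate_succ_apply,
      D.map_aeval_of_forall_eq_zero hB, hs, mul_one, ih]

theorem aeval_injective_of_slice [Algebra ℚ B] (hB : ∀ b : B, D b = 0) (hs : D s = 1) :
    Function.Injective (aeval (R := B) s) := by
  refine (injective_iff_map_eq_zero _).2 fun p hp => ?_
  have hderiv := D.iterate_map_aeval_of_slice hB hs p.natDegree p
  rw [hp, iterate_map_zero, iterate_derivative_natDegree, aeval_C, eq_comm,
    map_eq_zero_iff _ (FaithfulSMul.algebraMap_injective B A), nsmul_eq_mul] at hderiv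
  have hfact : IsUnit (p.natDegree.factorial : B) := by
    have hfact_ne : (p.natDegree.factorial : ℚ) ≠ 0 := by positivity
    simpa using hfact_ne.isUnit.map (algebraMap ℚ B)
  exact leadingCoeff_eq_zero.1 (hfact.mul_right_eq_zero.1 hderiv)

theorem aeval_surjective_of_slice [Algebra ℚ B] (hln : ∀ x : A, ∃ n : ℕ, D^[n] x = 0)
    (hB : ∀ a : A, a ∈ B ↔ D a = 0) (hs : D s = 1) :
    Function.Surjective (aeval (R := B) s) := by
  have hBD : ∀ b : B, D b = 0 := fun b => (hB b).1 b.2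
  suffices ∀ n : ℕ, ∀ a : A, D^[n] a = 0 → ∃ p : B[X], aeval s p = a from
    fun a => (hln a).elim (this · a)
  intro n
  induction n with
  | zero => exact fun a ha => ⟨0, by simpa using ha.symm⟩
  | succ n ih =>
    intro a ha
    obtain ⟨p, hp⟩ := ih (D a) ha
    obtain ⟨P, rfl⟩ := derivative_surjective p
    have hconst : a - aeval s P ∈ B := by
      rw [hB, D.map_sub, D.map_aeval_of_forall_eq_zero hBD, hs, mul_one]
      exact sub_eq_zero.2 hp.symm
    exact ⟨C ⟨_, hconst⟩ + P, by simp⟩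

end Derivation

/-- Slice theorem: if `R` contains `ℚ`, `A` is a commutative `R`-algebra and
`D : A → A` is a locally nilpotent `R`-derivation with a slice `s` (`D s = 1`),
then the natural map `Ker(D)[T] → A, T ↦ s` is an isomorphism, i.e.
`A = Ker(D)[s]` is a polynomial ring in one variable over `Ker(D)`. -/
theorem stmt_11 {R A : Type*} [CommRing R] [Algebra ℚ R] [CommRing A] [Algebra R A]
    (D : Derivation R A A) (hln : ∀ x : A, ∃ n : ℕ, (⇑D)^[n] x = 0)
    (s : A) (hs : D s = 1)
    (B : Subalgebra R A) (hB : ∀ a : A, a ∈ B ↔ D a = 0) :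
    Function.Bijective (Polynomial.aeval (R := B) s) := by
  let _ : Algebra ℚ B := ((algebraMap R B).comp (algebraMap ℚ R)).toAlgebra
  exact ⟨D.aeval_injective_of_slice (fun b => (hB b).1 b.2) hs,
    D.aeval_surjective_of_slice hln hB hs⟩
end

section
/- Let A be an integral domain of characteristic zero and D : A → A a nonzero locally nilpotent derivation. Then Ker(D) is inert (factorially closed) in A: for nonzero f, g ∈ A, if fg ∈ Ker(D) then f, g ∈ Ker(D). -/
/-!
Let `m`, `n` be the largest exponents with `Dᵐ f ≠ 0` and `Dⁿ g ≠ 0`. By the general Leibniz rule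
only one term of `Dᵐ⁺ⁿ (f g)` survives, namely `(m + n choose m) • Dᵐ f * Dⁿ g`, which is nonzero in
a domain of characteristic zero. Since `D (f g) = 0`, this forces `m + n = 0`.
-/

open Finset

namespace Derivation

variable {R A : Type*} [CommSemiring R] [CommSemiring A] [Algebra R A]

theorem iterate_apply_mul (D : Derivation R A A) (n : ℕ) (a b : A) :
    D^[n] (a * b) = ∑ ij ∈ antidiagonal n, n.choose ij.1 • (D^[ij.1] a * D^[ij.2] b) := by
  induction n with
  | zero => simp
  | succ n ih =>
    rw [sum_antidiagonal_choose_succ_nsmul (M := A) (fun i j => D^[i] a * D^[j] b) n]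
    simp only [Function.iterate_succ_apply', ih, map_sum, map_nsmul, leibniz, smul_eq_mul,
      smul_add, sum_add_distrib]
    congr 1
    refine sum_congr rfl fun ⟨i, j⟩ hij ↦ ?_
    rw [n.choose_symm_of_eq_add (HasAntidiagonal.mem_antidiagonal.1 hij).symm]
    ring

theorem iterate_eq_zero_of_le (D : Derivation R A A) {a : A} {m n : ℕ}
    (ha : D^[m] a = 0) (hmn : m ≤ n) : D^[n] a = 0 := by
  obtain ⟨k, rfl⟩ := Nat.exists_eq_add_of_le hmn
  rw [add_comm, Function.iterate_add_apply, ha, Function.iterate_fixed (map_zero D)]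

theorem iterate_add_apply_mul_of_iterate_succ_eq_zero (D : Derivation R A A) {a b : A} {m n : ℕ}
    (ha : D^[m + 1] a = 0) (hb : D^[n + 1] b = 0) :
    D^[m + n] (a * b) = (m + n).choose m • (D^[m] a * D^[n] b) := by
  rw [iterate_apply_mul, sum_eq_single_of_mem (m, n) (HasAntidiagonal.mem_antidiagonal.2 rfl)]
  rintro ⟨i, j⟩ hij hne
  rw [HasAntidiagonal.mem_antidiagonal] at hij
  rcases lt_or_gt_of_ne (show i ≠ m by grind) with hi | hi
  · rw [D.iterate_eq_zero_of_le hb (by omega), mul_zero, smul_zero]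
  · rw [D.iterate_eq_zero_of_le ha hi, zero_mul, smul_zero]

end Derivation

theorem Function.exists_iterate_ne_zero_and_iterate_succ_eq_zero {M : Type*} [Zero M]
    {φ : M → M} {x : M} (hx : x ≠ 0) {n : ℕ} (hn : φ^[n] x = 0) :
    ∃ m, φ^[m] x ≠ 0 ∧ φ^[m + 1] x = 0 := by
  induction n with
  | zero => exact absurd hn hx
  | succ n ih => by_cases h : φ^[n] x = 0 <;> [exact ih h; exact ⟨n, h, hn⟩]

theorem stmt_12_general {A : Type*} [CommRing A] [IsDomain A] [Algebra ℚ A]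
    (D : Derivation ℤ A A) (hln : ∀ x : A, ∃ n : ℕ, (⇑D)^[n] x = 0) :
    ∀ f g : A, f ≠ 0 → g ≠ 0 → D (f * g) = 0 → D f = 0 ∧ D g = 0 := by
  intro f g hf hg hfg
  have : CharZero A := charZero_of_injective_algebraMap (algebraMap ℚ A).injective
  obtain ⟨m, hfm, hfm'⟩ :=
    Function.exists_iterate_ne_zero_and_iterate_succ_eq_zero hf (hln f).choose_spec
  obtain ⟨n, hgn, hgn'⟩ :=
    Function.exists_iterate_ne_zero_and_iterate_succ_eq_zero hg (hln g).choose_spec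
  have hfg_top : (⇑D)^[m + n] (f * g) ≠ 0 := by
    rw [D.iterate_add_apply_mul_of_iterate_succ_eq_zero hfm' hgn']
    exact smul_ne_zero (Nat.choose_pos (Nat.le_add_right m n)).ne' (mul_ne_zero hfm hgn)
  obtain ⟨rfl, rfl⟩ : m = 0 ∧ n = 0 := by
    by_contra h
    exact hfg_top (D.iterate_eq_zero_of_le (m := 1) hfg (by omega))
  exact ⟨hfm', hgn'⟩

/-- The kernel of a nonzero locally nilpotent derivation of a domain of characteristic
zero is factorially closed (inert): if `fg ∈ Ker(D)` with `f, g ≠ 0` then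
`f, g ∈ Ker(D)`. -/
theorem stmt_12 {A : Type*} [CommRing A] [IsDomain A] [Algebra ℚ A]
    (D : Derivation ℤ A A) (hln : ∀ x : A, ∃ n : ℕ, (⇑D)^[n] x = 0) (hD : D ≠ 0) :
    ∀ f g : A, f ≠ 0 → g ≠ 0 → D (f * g) = 0 → D f = 0 ∧ D g = 0 :=
  stmt_12_general D hln
end

section
/- Let R be a domain with fraction field K, A an R-algebra that is a domain, and B₁, B₂ R-subalgebras of A such that B₂ is inert in A and B₁ ⊗_R K = B₂ ⊗_R K inside A ⊗_R K. Then B₁ ⊆ B₂. Consequently, if additionally B₁ is inert in A, then B₁ = B₂. -/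
namespace Subalgebra

variable {R A : Type*} [CommRing R] [CommRing A] [Algebra R A]

def IsInert (B : Subalgebra R A) : Prop :=
  ∀ f g : A, f ≠ 0 → g ≠ 0 → f * g ∈ B → f ∈ B ∧ g ∈ B

theorem le_of_isInert_of_forall_exists_mul_mem (hinj : Function.Injective (algebraMap R A))
    {C D : Subalgebra R A} (hD : D.IsInert)
    (hCD : ∀ x ∈ C, ∃ r : R, r ≠ 0 ∧ algebraMap R A r * x ∈ D) : C ≤ D := by
  intro x hx
  rcases eq_or_ne x 0 with rfl | hx0
  · exact D.zero_mem
  obtain ⟨r, hr, hrx⟩ := hCD x hx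
  have hr' : algebraMap R A r ≠ 0 := (map_ne_zero_iff _ hinj).mpr hr
  exact (hD _ _ hr' hx0 hrx).2

end Subalgebra

open Subalgebra in
theorem stmt_19_general {R A : Type*} [CommRing R] [CommRing A]
    [Algebra R A] (hinj : Function.Injective (algebraMap R A))
    (B₁ B₂ : Subalgebra R A)
    (hinert₂ : ∀ f g : A, f ≠ 0 → g ≠ 0 → f * g ∈ B₂ → f ∈ B₂ ∧ g ∈ B₂)
    (h12 : ∀ x ∈ B₁, ∃ r : R, r ≠ 0 ∧ algebraMap R A r * x ∈ B₂)
    (h21 : ∀ x ∈ B₂, ∃ r : R, r ≠ 0 ∧ algebraMap R A r * x ∈ B₁) :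
    B₁ ≤ B₂ ∧
      ((∀ f g : A, f ≠ 0 → g ≠ 0 → f * g ∈ B₁ → f ∈ B₁ ∧ g ∈ B₁) → B₁ = B₂) := by
  have h₁₂ : B₁ ≤ B₂ := le_of_isInert_of_forall_exists_mul_mem hinj hinert₂ h12
  exact ⟨h₁₂, fun hinert₁ =>
    le_antisymm h₁₂ (le_of_isInert_of_forall_exists_mul_mem hinj hinert₁ h21)⟩

/-- Let `R` be a domain, `A` an `R`-algebra domain, and `B₁, B₂` `R`-subalgebras of
`A` with `B₂` inert in `A`. If `B₁ ⊗_R K = B₂ ⊗_R K` inside `A ⊗_R K` (i.e. every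
element of each `Bᵢ` becomes an element of the other after multiplying by a suitable
nonzero element of `R`), then `B₁ ⊆ B₂`; consequently, if `B₁` is also inert in `A`,
then `B₁ = B₂`. -/
theorem stmt_19 {R A : Type*} [CommRing R] [IsDomain R] [CommRing A] [IsDomain A]
    [Algebra R A] (hinj : Function.Injective (algebraMap R A))
    (B₁ B₂ : Subalgebra R A)
    (hinert₂ : ∀ f g : A, f ≠ 0 → g ≠ 0 → f * g ∈ B₂ → f ∈ B₂ ∧ g ∈ B₂)
    (h12 : ∀ x ∈ B₁, ∃ r : R, r ≠ 0 ∧ algebraMap R A r * x ∈ B₂)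
    (h21 : ∀ x ∈ B₂, ∃ r : R, r ≠ 0 ∧ algebraMap R A r * x ∈ B₁) :
    B₁ ≤ B₂ ∧
      ((∀ f g : A, f ≠ 0 → g ≠ 0 → f * g ∈ B₁ → f ∈ B₁ ∧ g ∈ B₁) → B₁ = B₂) :=
  stmt_19_general hinj B₁ B₂ hinert₂ h12 h21
end
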